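/- arXiv:2006.00188 — 2 statements merged into one kernel-verified Lean document; each statement's English description precedes it below -/
import Mathlib

section
/- Let X be a metric space, f : X → X a continuous map, and suppose f fails to be equicontinuous at the point x ∈ X (i.e. the family of iterates {fᵐ : m ∈ ℕ} is not equicontinuous at x). Then for every n ∈ ℕ there exists i with 0 ≤ i < n such that the map fⁿ fails to be equicontinuous at the point fⁱ(x), i.e. the family {(fⁿ)ᵐ : m ∈ ℕ} is not equicontinuous at fⁱ(x). -/
open Set Filter Metric

/-- The family of iterates of `f` is equicontinuous at `x`. -/
def IterEquicontinuousAt {X : Type*} [MetricSpace X] (f : X → X) (x : X) : Prop :=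
  ∀ ε : ℝ, 0 < ε → ∃ δ : ℝ, 0 < δ ∧ ∀ y : X, dist x y < δ →
    ∀ n : ℕ, dist (f^[n] x) (f^[n] y) ≤ ε

/-- The family of iterates of `f` is equicontinuous (at every point). -/
def IterEquicontinuous {X : Type*} [MetricSpace X] (f : X → X) : Prop :=
  ∀ x : X, IterEquicontinuousAt f x

/-- A subset of a topological space is an arc if it is homeomorphic to `[0,1]`. -/
def IsArc {X : Type*} [TopologicalSpace X] (A : Set X) : Prop :=
  Nonempty (A ≃ₜ unitInterval)

/-- A dendrite: a compact, connected, locally connected metric space containing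
no subspace homeomorphic to the unit circle. -/
def IsDendrite (X : Type*) [MetricSpace X] : Prop :=
  CompactSpace X ∧ ConnectedSpace X ∧ LocallyConnectedSpace X ∧
    ∀ S : Set X, ¬ Nonempty (S ≃ₜ (Metric.sphere (0 : ℂ) 1))

/-- `x` is a branching point: `X \ {x}` has at least three connected components. -/
def IsBranchingPoint {X : Type*} [TopologicalSpace X] (x : X) : Prop :=
  ∃ c₁ c₂ c₃ : ConnectedComponents ↥({x}ᶜ : Set X), c₁ ≠ c₂ ∧ c₁ ≠ c₃ ∧ c₂ ≠ c₃

/-- `x` has finite order: `X \ {x}` has finitely many connected components. -/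
def HasFiniteOrder {X : Type*} [TopologicalSpace X] (x : X) : Prop :=
  Finite (ConnectedComponents ↥({x}ᶜ : Set X))

/-- A finite tree: a dendrite with finitely many branching points, each of finite order. -/
def IsFiniteTree (X : Type*) [MetricSpace X] : Prop :=
  IsDendrite X ∧ {x : X | IsBranchingPoint x}.Finite ∧
    ∀ x : X, IsBranchingPoint x → HasFiniteOrder x

/-- `A` is an `f`-expanding arc: an arc with `A ⊊ fⁿ[A]` for some `n ≥ 1`. -/
def IsExpandingArc {X : Type*} [TopologicalSpace X] (f : X → X) (A : Set X) : Prop :=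
  IsArc A ∧ ∃ n : ℕ, 0 < n ∧ A ⊂ f^[n] '' A

/-- The set of fixed points of `fⁿ`. -/
def fixSet {X : Type*} (f : X → X) (n : ℕ) : Set X := {x | f^[n] x = x}

/-- The set of periodic points of `f`. -/
def perSet {X : Type*} (f : X → X) : Set X := {x | ∃ n : ℕ, 0 < n ∧ f^[n] x = x}

/-- The intersection `⋂_{m ≥ 1} fᵐ[X]` of the images of all the iterates of `f`. -/
def coreSet {X : Type*} (f : X → X) : Set X := ⋂ m : ℕ, f^[m + 1] '' Set.univ

/-- In a dendrite, `y` belongs to the (unique) arc joining `a` and `b` iff every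
connected subset containing `a` and `b` contains `y`. -/
def InArc {X : Type*} [TopologicalSpace X] (a b y : X) : Prop :=
  ∀ C : Set X, IsPreconnected C → a ∈ C → b ∈ C → y ∈ C

/-- An ultrafilter on ℕ is nonprincipal if it is not of the form `{A | n ∈ A}`. -/
def IsNonprincipal (u : Ultrafilter ℕ) : Prop := ∀ n : ℕ, u ≠ pure n

/-- `fu` is the `u`-limit function of `f`: `fu x = u-lim_n fⁿ(x)`. -/
def IsULimitFun {X : Type*} [MetricSpace X] (u : Ultrafilter ℕ) (f fu : X → X) : Prop :=
  ∀ x : X, ∀ ε : ℝ, 0 < ε → {n : ℕ | dist (f^[n] x) (fu x) < ε} ∈ u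

/-- A `g`-divergent sequence. -/
def IsDivergentSeq {X : Type*} [MetricSpace X] (g : X → X) (x : ℕ → X) : Prop :=
  (∃ L : X, Filter.Tendsto x Filter.atTop (nhds L) ∧
     ∃ U : Set X, IsOpen U ∧ L ∈ U ∧ ∀ n : ℕ, 0 < n → g^[n] (x 0) ∉ U) ∧
  ∀ n : ℕ, g (x (n + 1)) = x n

/-- A `g`-backwards sequence in the arc `I`. -/
def IsBackwardSeq {X : Type*} [TopologicalSpace X] (g : X → X) (I : Set X) (x : ℕ → X) : Prop :=
  (∀ n : ℕ, x n ∈ I) ∧ (∀ n : ℕ, InArc (x n) (x (n + 2)) (x (n + 1))) ∧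
    ∀ n : ℕ, g (x (n + 1)) = x n

theorem stmt9 {X : Type*} [MetricSpace X] (f : X → X) (hf : Continuous f)
    (x : X) (hx : ¬ IterEquicontinuousAt f x) (n : ℕ) (hn : 0 < n) :
    ∃ i : ℕ, i < n ∧ ¬ IterEquicontinuousAt (f^[n]) (f^[i] x) := by
  by_contra h
  push_neg at h
  apply hx
  intro ε hε
  -- for each i < n choose δ for equicontinuity of f^[n] at f^[i] x
  have hkey : ∀ i : ℕ, ∃ δ : ℝ, 0 < δ ∧ (i < n → ∀ y : X, dist (f^[i] x) y < δ →
      ∀ q : ℕ, dist ((f^[n])^[q] (f^[i] x)) ((f^[n])^[q] y) ≤ ε) := by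
    intro i
    by_cases hi : i < n
    · obtain ⟨δ, hδ, hδ'⟩ := h i hi ε hε
      exact ⟨δ, hδ, fun _ => hδ'⟩
    · exact ⟨1, one_pos, fun h' => absurd h' hi⟩
  choose δ hδpos hδ using hkey
  -- continuity: choose η i for f^[i] at x
  have hcont : ∀ i : ℕ, ∃ η : ℝ, 0 < η ∧ ∀ y : X, dist x y < η →
      dist (f^[i] x) (f^[i] y) < δ i := by
    intro i
    have : ContinuousAt (f^[i]) x := (hf.iterate i).continuousAt
    rw [Metric.continuousAt_iff] at this
    obtain ⟨η, hη, hη'⟩ := this (δ i) (hδpos i)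
    exact ⟨η, hη, fun y hy => by
      have := hη' (show dist y x < η by rwa [dist_comm])
      rwa [dist_comm (f^[i] y)] at this⟩
  choose η hηpos hη using hcont
  -- take min over i < n
  have hne : (Finset.range n).Nonempty := ⟨0, Finset.mem_range.2 hn⟩
  refine ⟨(Finset.range n).inf' hne η, ?_, ?_⟩
  · exact (Finset.lt_inf'_iff hne).2 (fun i _ => hηpos i)
  · intro y hy m
    set r := m % n with hr
    set q := m / n with hq
    have hrn : r < n := Nat.mod_lt _ hn
    have hmin : (Finset.range n).inf' hne η ≤ η r :=
      Finset.inf'_le _ (Finset.mem_range.2 hrn)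
    have hy' : dist x y < η r := lt_of_lt_of_le hy hmin
    have hclose : dist (f^[r] x) (f^[r] y) < δ r := hη r y hy'
    have hb := hδ r hrn (f^[r] y) hclose q
    have hm : n * q + r = m := Nat.div_add_mod m n
    calc dist (f^[m] x) (f^[m] y)
        = dist (f^[n * q + r] x) (f^[n * q + r] y) := by rw [hm]
      _ = dist ((f^[n])^[q] (f^[r] x)) ((f^[n])^[q] (f^[r] y)) := by
          simp [Function.iterate_add_apply, Function.iterate_mul]
      _ ≤ ε := hb
end

section
/- Let X be a compact metric space and g : X → X a continuous map. Suppose there exists m ∈ ℕ such that X contains a gᵐ-divergent sequence, i.e. a sequence (xₙ)ₙ≥0 of points of X such that (1) the limit x = limₙ→∞ xₙ exists, (2) gᵐ(xₙ₊₁) = xₙ for every n, and (3) there is an open neighbourhood U of x with U ∩ {(gᵐ)ⁿ(x₀) : n ∈ ℕ} = ∅. Then for every nonprincipal ultrafilter u on ℕ, the u-limit function gᵘ : X → X is discontinuous. -/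
open Set Filter Metric

open Topology

/-
Let `L = lim xₖ` and `f = gᵐ`. Passing to the limit in `f(xₖ₊₁) = xₖ` shows `f(L) = L`. A
nonprincipal `u` contains a residue class `{n ≡ r mod m}` and all cofinite sets, so
`gᵘ(L) = gʳ(L)`, and `gᵐ⁻ʳ(gᵘ(xₖ))` is a `u`-limit of points `gᵐ⁻ʳ⁺ⁿ(xₖ)`, `n ≡ r`, `n` large, which
all lie on the forward `f`-orbit of `x₀`; hence `gᵐ⁻ʳ(gᵘ(xₖ)) ∉ U`. If `gᵘ` were continuous,
`gᵐ⁻ʳ(gᵘ(xₖ)) → gᵐ⁻ʳ(gᵘ(L)) = gᵐ(L) = L ∈ U`, a contradiction.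
-/

theorem IsNonprincipal.le_atTop {u : Ultrafilter ℕ} (hu : IsNonprincipal u) :
    (u : Filter ℕ) ≤ atTop := by
  rcases u.le_cofinite_or_eq_pure with h | ⟨a, rfl⟩
  · exact h.trans_eq Nat.cofinite_eq_atTop
  · exact absurd rfl (hu a)

theorem Ultrafilter.exists_mod_eq_mem (u : Ultrafilter ℕ) {m : ℕ} (hm : 0 < m) :
    ∃ r < m, {n | n % m = r} ∈ u := by
  have hmod : Iio m ∈ u.map (· % m) := by
    rw [Ultrafilter.mem_map]
    exact univ_mem' fun n => Nat.mod_lt n hm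
  obtain ⟨r, hr, hpure⟩ := Ultrafilter.eq_pure_of_finite_mem (finite_Iio m) hmod
  have hr_mem : {r} ∈ u.map (· % m) := hpure ▸ Ultrafilter.mem_pure.2 rfl
  exact ⟨r, hr, Ultrafilter.mem_map.1 hr_mem⟩

section ULimit

variable {X : Type*} [MetricSpace X] {u : Ultrafilter ℕ} {f fu : X → X}

theorem IsULimitFun.tendsto (hu : IsULimitFun u f fu) (x : X) :
    Tendsto (fun n => f^[n] x) u (𝓝 (fu x)) :=
  Metric.tendsto_nhds.2 (hu x)

theorem IsULimitFun.apply_eq_of_eventually_eq (hu : IsULimitFun u f fu) {x y : X}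
    (h : ∀ᶠ n in (u : Filter ℕ), f^[n] x = y) : fu x = y :=
  tendsto_nhds_unique (hu.tendsto x) (tendsto_const_nhds.congr' (h.mono fun _ hn => hn.symm))

theorem IsULimitFun.iterate_apply_mem (hu : IsULimitFun u f fu) (hf : Continuous f)
    {C : Set X} (hC : IsClosed C) (j : ℕ) {x : X}
    (h : ∀ᶠ n in (u : Filter ℕ), f^[j] (f^[n] x) ∈ C) : f^[j] (fu x) ∈ C :=
  hC.mem_of_tendsto (((hf.iterate j).tendsto _).comp (hu.tendsto x)) h

end ULimit

section Backward

variable {X : Type*} {f : X → X} {x : ℕ → X}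

theorem iterate_apply_eq_of_map_succ (hx : ∀ n, f (x (n + 1)) = x n) (k : ℕ) :
    f^[k] (x k) = x 0 := by
  induction k with
  | zero => rfl
  | succ k ih => rw [Function.iterate_succ_apply, hx k, ih]

theorem isFixedPt_of_tendsto_of_map_succ [TopologicalSpace X] [T2Space X] {L : X}
    (hf : Continuous f) (hL : Tendsto x atTop (𝓝 L)) (hx : ∀ n, f (x (n + 1)) = x n) :
    Function.IsFixedPt f L := by
  have hshift : Tendsto (fun n => f (x (n + 1))) atTop (𝓝 (f L)) :=
    (hf.tendsto L).comp (hL.comp (tendsto_add_atTop_nat 1))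
  simp only [hx] at hshift
  exact tendsto_nhds_unique hshift hL

end Backward

theorem stmt18_general {X : Type*} [MetricSpace X]
    (g : X → X) (hg : Continuous g)
    (hdiv : ∃ m : ℕ, 0 < m ∧ ∃ x : ℕ → X, IsDivergentSeq (g^[m]) x) :
    ∀ (u : Ultrafilter ℕ) (gu : X → X),
      IsNonprincipal u → IsULimitFun u g gu → ¬ Continuous gu := by
  obtain ⟨m, hm, x, ⟨L, hL, U, hU, hLU, hUorb⟩, hback⟩ := hdiv
  intro u gu hnp hgu hcont
  have hfix : g^[m] L = L := isFixedPt_of_tendsto_of_map_succ (hg.iterate m) hL hback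
  obtain ⟨r, hr, hru⟩ := u.exists_mod_eq_mem hm
  have hguL : gu L = g^[r] L := hgu.apply_eq_of_eventually_eq <| by
    filter_upwards [hru] with n (hn : n % m = r)
    rw [← Nat.mod_add_div n m, hn, Function.iterate_add_apply, Function.iterate_mul,
      Function.iterate_fixed hfix]
  have hout (k : ℕ) : g^[m - r] (gu (x k)) ∈ Uᶜ := by
    refine hgu.iterate_apply_mem hg hU.isClosed_compl _ ?_
    filter_upwards [hru, hnp.le_atTop (eventually_ge_atTop (k * m))] with n (hn : n % m = r) hkn
    have hk : k ≤ n / m := (Nat.le_div_iff_mul_le hm).2 hkn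
    have hsum : m - r + n = m * (n / m + 1) := by
      have := Nat.div_add_mod n m
      rw [Nat.mul_succ]; omega
    rw [← Function.iterate_add_apply, hsum, Function.iterate_mul,
      show n / m + 1 = (n / m + 1 - k) + k by omega, Function.iterate_add_apply,
      iterate_apply_eq_of_map_succ hback]
    exact hUorb _ (by omega)
  have hlim : Tendsto (fun k => g^[m - r] (gu (x k))) atTop (𝓝 L) := by
    have := (((hg.iterate (m - r)).comp hcont).tendsto L).comp hL
    rwa [Function.comp_apply, hguL, ← Function.iterate_add_apply, Nat.sub_add_cancel hr.le,
      hfix] at this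
  exact hU.isClosed_compl.mem_of_tendsto hlim (Eventually.of_forall hout) hLU

theorem stmt18 {X : Type*} [MetricSpace X] [CompactSpace X]
    (g : X → X) (hg : Continuous g)
    (hdiv : ∃ m : ℕ, 0 < m ∧ ∃ x : ℕ → X, IsDivergentSeq (g^[m]) x) :
    ∀ (u : Ultrafilter ℕ) (gu : X → X),
      IsNonprincipal u → IsULimitFun u g gu → ¬ Continuous gu :=
  stmt18_general g hg hdiv
end
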